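/- Let K be a convex body in ℝⁿ. Then the function (x, y) ↦ b*_K(x, y) is finite, positive, and continuous on (int K) × (ℝⁿ \ {0}). -/

import Mathlib

/-- A convex body in ℝⁿ: a compact convex set with nonempty interior. -/
def IsConvexBody {n : ℕ} (K : Set (EuclideanSpace ℝ (Fin n))) : Prop :=
  IsCompact K ∧ Convex ℝ K ∧ (interior K).Nonempty

/-- The ellipse with parameters `(a, b)` through `x` in direction `y`,
`θ ↦ (cos θ)•a + b(sin θ)•y + (x - a)`, is inscribed in `K`. -/
def InscribedEllipse {n : ℕ} (K : Set (EuclideanSpace ℝ (Fin n)))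
    (x y a : EuclideanSpace ℝ (Fin n)) (b : ℝ) : Prop :=
  ∀ θ : ℝ, (Real.cos θ) • a + (b * Real.sin θ) • y + (x - a) ∈ K

/-- `b*_K(x,y)`: the supremum of `b > 0` such that some ellipse with parameters
`(a,b)` through `x` in direction `y` is inscribed in `K`. -/
noncomputable def bStar {n : ℕ} (K : Set (EuclideanSpace ℝ (Fin n)))
    (x y : EuclideanSpace ℝ (Fin n)) : ℝ :=
  sSup { b : ℝ | 0 < b ∧ ∃ a, InscribedEllipse K x y a b }

/-!
The ellipse through `x` contains the two points `x - a ± b • y`, so `b ‖y‖ ≤ R` when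
`K ⊆ closedBall 0 R`: this makes `b*` finite. If `closedBall x r ⊆ K`, the degenerate ellipse
`a = 0` (a segment) gives `b* ≥ r / ‖y‖ > 0`. For continuity, shrink an inscribed ellipse at
`(x, y)` by the factor `1 - t` towards a point `x'` with `closedBall x' r ⊆ K`: by convexity, the
shrunken ellipse can still absorb a perturbation of size `t r`, enough to move it to any `(x', y')`
close to `(x, y)`. Hence `(1 - t) b*(x, y) ≤ b*(x', y')` for all nearby pairs, in both directions,
which forces continuity.
-/

open Filter Topology Metric

lemma Convex.combo_add_mem_of_closedBall_subset {E : Type*} [NormedAddCommGroup E]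
    [NormedSpace ℝ E] {K : Set E} {p z v : E} {r t : ℝ} (hK : Convex ℝ K)
    (hball : closedBall z r ⊆ K) (hp : p ∈ K) (ht₀ : 0 < t) (ht₁ : t ≤ 1) (hv : ‖v‖ ≤ t * r) :
    (1 - t) • p + t • z + v ∈ K := by
  have hz : z + t⁻¹ • v ∈ K := by
    apply hball
    rw [mem_closedBall, dist_eq_norm, add_sub_cancel_left, norm_smul, Real.norm_eq_abs,
      abs_inv, abs_of_pos ht₀, inv_mul_le_iff₀ ht₀]
    exact hv
  convert hK hp hz (sub_nonneg.mpr ht₁) ht₀.le (sub_add_cancel 1 t) using 1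
  rw [smul_add, smul_smul, mul_inv_cancel₀ ht₀.ne', one_smul, add_assoc]

lemma tendsto_of_forall_one_sub_mul_le {α : Type*} {f : α → ℝ} {l : Filter α} {c : ℝ}
    (h : ∀ t ∈ Set.Ioo (0 : ℝ) 1, ∀ᶠ p in l, (1 - t) * c ≤ f p ∧ (1 - t) * f p ≤ c) :
    Tendsto f l (𝓝 c) := by
  have hscale (d : ℝ) : Tendsto (fun t : ℝ => (1 - t) * d) (𝓝[>] 0) (𝓝 d) :=
    (Continuous.tendsto' (by fun_prop) 0 d (by simp)).mono_left nhdsWithin_le_nhds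
  refine tendsto_order.2 ⟨fun a ha => ?_, fun a ha => ?_⟩
  · obtain ⟨t, hat, ht⟩ := ((hscale c).eventually_const_lt ha).and
      (Ioo_mem_nhdsGT zero_lt_one) |>.exists
    filter_upwards [h t ht] with p hp using hat.trans_le hp.1
  · obtain ⟨t, hct, ht⟩ := ((hscale a).eventually_const_lt ha).and
      (Ioo_mem_nhdsGT zero_lt_one) |>.exists
    filter_upwards [h t ht] with p hp
    exact lt_of_mul_lt_mul_left (hp.2.trans_lt hct) (by linarith [ht.2])

section Ellipse

variable {n : ℕ} {K : Set (EuclideanSpace ℝ (Fin n))} {x y x' y' a : EuclideanSpace ℝ (Fin n)}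
  {b r R t : ℝ}

lemma InscribedEllipse.abs_mul_norm_le (hR : K ⊆ closedBall 0 R)
    (hE : InscribedEllipse K x y a b) : |b| * ‖y‖ ≤ R := by
  have h₁ := mem_closedBall_zero_iff.mp (hR (hE (Real.pi / 2)))
  have h₂ := mem_closedBall_zero_iff.mp (hR (hE (-(Real.pi / 2))))
  have hdiff : (Real.cos (Real.pi / 2) • a + (b * Real.sin (Real.pi / 2)) • y + (x - a)) -
      (Real.cos (-(Real.pi / 2)) • a + (b * Real.sin (-(Real.pi / 2))) • y + (x - a))
      = (2 * b) • y := by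
    rw [Real.cos_neg, Real.sin_neg, Real.cos_pi_div_two, Real.sin_pi_div_two]
    module
  have h₃ : ‖(2 * b) • y‖ ≤ R + R := hdiff ▸ (norm_sub_le _ _).trans (add_le_add h₁ h₂)
  rw [norm_smul, Real.norm_eq_abs, abs_mul, abs_two] at h₃
  linarith

lemma inscribedEllipse_zero_of_closedBall_subset (hball : closedBall x r ⊆ K)
    (hb : |b| * ‖y‖ ≤ r) : InscribedEllipse K x y 0 b := by
  intro θ
  apply hball
  rw [mem_closedBall, dist_eq_norm, smul_zero, zero_add, sub_zero, add_sub_cancel_right,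
    norm_smul, Real.norm_eq_abs, abs_mul]
  calc |b| * |Real.sin θ| * ‖y‖ ≤ |b| * 1 * ‖y‖ := by
        gcongr
        exact Real.abs_sin_le_one θ
    _ ≤ r := by rwa [mul_one]

lemma InscribedEllipse.perturb (hK : Convex ℝ K) (hball : closedBall x' r ⊆ K)
    (ht₀ : 0 < t) (ht₁ : t ≤ 1) (hE : InscribedEllipse K x y a b)
    (hclose : ‖x' - x‖ + ‖b • (y' - y)‖ ≤ t * r) :
    InscribedEllipse K x' y' ((1 - t) • a) ((1 - t) * b) := by
  intro θ
  set v := (1 - t) • ((x' - x) + Real.sin θ • b • (y' - y))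
  have hv : ‖v‖ ≤ t * r := by
    have hsin : ‖Real.sin θ • b • (y' - y)‖ ≤ ‖b • (y' - y)‖ := by
      rw [norm_smul, Real.norm_eq_abs]
      exact mul_le_of_le_one_left (norm_nonneg _) (Real.abs_sin_le_one θ)
    calc ‖v‖ = (1 - t) * ‖(x' - x) + Real.sin θ • b • (y' - y)‖ := by
          rw [norm_smul, Real.norm_eq_abs, abs_of_nonneg (by linarith)]
      _ ≤ 1 * (‖x' - x‖ + ‖b • (y' - y)‖) := by
          gcongr
          · linarith
          · exact (norm_add_le _ _).trans (by gcongr)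
      _ ≤ t * r := by rwa [one_mul]
  convert hK.combo_add_mem_of_closedBall_subset hball (hE θ) ht₀ ht₁ hv using 1
  module

lemma bddAbove_inscribed (hR : K ⊆ closedBall 0 R) (hy : y ≠ 0) :
    BddAbove {b : ℝ | 0 < b ∧ ∃ a, InscribedEllipse K x y a b} := by
  refine ⟨R / ‖y‖, fun b ⟨hb, a, hE⟩ => ?_⟩
  rw [le_div_iff₀ (norm_pos_iff.mpr hy), ← abs_of_pos hb]
  exact hE.abs_mul_norm_le hR

lemma bStar_pos (hR : K ⊆ closedBall 0 R) (hball : closedBall x r ⊆ K) (hr : 0 < r)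
    (hy : y ≠ 0) : 0 < bStar K x y := by
  have hy' : 0 < ‖y‖ := norm_pos_iff.mpr hy
  have hrb : 0 < r / ‖y‖ := div_pos hr hy'
  refine hrb.trans_le (le_csSup (bddAbove_inscribed hR hy) ⟨hrb, 0, ?_⟩)
  exact inscribedEllipse_zero_of_closedBall_subset hball
    (by rw [abs_of_pos hrb, div_mul_cancel₀ _ hy'.ne'])

lemma one_sub_mul_bStar_le (hK : Convex ℝ K) (hR : K ⊆ closedBall 0 R)
    (hball : closedBall x' r ⊆ K) (hy : y ≠ 0) (hy' : y' ≠ 0) (ht₀ : 0 < t) (ht₁ : t < 1)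
    (hclose : ‖x' - x‖ + R * ‖y' - y‖ / ‖y‖ ≤ t * r) :
    (1 - t) * bStar K x y ≤ bStar K x' y' := by
  have hyn : 0 < ‖y‖ := norm_pos_iff.mpr hy
  have ht : 0 < 1 - t := by linarith
  have hbStar : 0 ≤ bStar K x' y' := Real.sSup_nonneg fun b hb => hb.1.le
  rw [← le_div_iff₀' ht]
  refine Real.sSup_le (fun b ⟨hb, a, hE⟩ => ?_) (div_nonneg hbStar ht.le)
  have hbR : b * ‖y‖ ≤ R := abs_of_pos hb ▸ hE.abs_mul_norm_le hR
  have hmove : ‖x' - x‖ + ‖b • (y' - y)‖ ≤ t * r := by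
    refine le_trans ?_ hclose
    rw [norm_smul, Real.norm_eq_abs, abs_of_pos hb, add_le_add_iff_left]
    calc b * ‖y' - y‖ = b * ‖y‖ * ‖y' - y‖ / ‖y‖ := by field_simp
      _ ≤ R * ‖y' - y‖ / ‖y‖ := by gcongr
  rw [le_div_iff₀' ht]
  exact le_csSup (bddAbove_inscribed hR hy')
    ⟨by positivity, _, hE.perturb hK hball ht₀ ht₁.le hmove⟩

lemma eventually_one_sub_mul_bStar_le (hK : Convex ℝ K) (hR : K ⊆ closedBall 0 R)
    {x₀ y₀ : EuclideanSpace ℝ (Fin n)} (hx₀ : x₀ ∈ interior K) (hy₀ : y₀ ≠ 0)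
    (ht : t ∈ Set.Ioo (0 : ℝ) 1) :
    ∀ᶠ p in 𝓝 (x₀, y₀), (1 - t) * bStar K x₀ y₀ ≤ bStar K p.1 p.2 ∧
      (1 - t) * bStar K p.1 p.2 ≤ bStar K x₀ y₀ := by
  obtain ⟨r, hr, hball⟩ := nhds_basis_closedBall.mem_iff.1 (mem_interior_iff_mem_nhds.1 hx₀)
  have hballs : ∀ᶠ p in 𝓝 (x₀, y₀), closedBall p.1 (r / 2) ⊆ K := by
    filter_upwards [continuous_fst.continuousAt.eventually (ball_mem_nhds x₀ (half_pos hr))]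
      with p hp
    exact (closedBall_subset_closedBall' (by linarith [mem_ball.1 hp])).trans hball
  have hclose₁ : ∀ᶠ p in 𝓝 (x₀, y₀), ‖p.1 - x₀‖ + R * ‖p.2 - y₀‖ / ‖y₀‖ < t * (r / 2) := by
    refine Tendsto.eventually_lt_const (mul_pos ht.1 (half_pos hr)) ?_
    exact Continuous.tendsto' (by fun_prop) _ _ (by simp)
  have hclose₂ : ∀ᶠ p in 𝓝 (x₀, y₀), ‖x₀ - p.1‖ + R * ‖y₀ - p.2‖ / ‖p.2‖ < t * (r / 2) := by
    refine Tendsto.eventually_lt_const (mul_pos ht.1 (half_pos hr)) ?_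
    have : ContinuousAt (fun p : EuclideanSpace ℝ (Fin n) × EuclideanSpace ℝ (Fin n) =>
        ‖x₀ - p.1‖ + R * ‖y₀ - p.2‖ / ‖p.2‖) (x₀, y₀) := by
      fun_prop (disch := simpa using hy₀)
    simpa using this.tendsto
  filter_upwards [hballs, continuous_snd.continuousAt.eventually_ne hy₀, hclose₁, hclose₂]
    with p hp hy hclose₁ hclose₂
  exact ⟨one_sub_mul_bStar_le hK hR hp hy₀ hy ht.1 ht.2 hclose₁.le,
    one_sub_mul_bStar_le hK hR ((closedBall_subset_closedBall (half_le_self hr.le)).trans hball)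
      hy hy₀ ht.1 ht.2 hclose₂.le⟩

end Ellipse

theorem stmt_5 {n : ℕ} (K : Set (EuclideanSpace ℝ (Fin n)))
    (hK : IsConvexBody K) :
    (∀ x ∈ interior K, ∀ y : EuclideanSpace ℝ (Fin n), y ≠ 0 →
      BddAbove { b : ℝ | 0 < b ∧ ∃ a, InscribedEllipse K x y a b } ∧ 0 < bStar K x y) ∧
    ContinuousOn
      (fun p : EuclideanSpace ℝ (Fin n) × EuclideanSpace ℝ (Fin n) => bStar K p.1 p.2)
      ((interior K) ×ˢ { y : EuclideanSpace ℝ (Fin n) | y ≠ 0 }) := by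
  obtain ⟨hcompact, hconvex, -⟩ := hK
  obtain ⟨R, hR⟩ := hcompact.isBounded.subset_closedBall 0
  refine ⟨fun x hx y hy => ⟨bddAbove_inscribed hR hy, ?_⟩, ?_⟩
  · obtain ⟨r, hr, hball⟩ := nhds_basis_closedBall.mem_iff.1 (mem_interior_iff_mem_nhds.1 hx)
    exact bStar_pos hR hball hr hy
  · refine continuousOn_of_forall_continuousAt fun ⟨x, y⟩ ⟨hx, hy⟩ => ?_
    exact tendsto_of_forall_one_sub_mul_le fun t ht =>
      eventually_one_sub_mul_bStar_le hconvex hR hx hy ht
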